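/- The property FAb (every finite index subgroup has finite abelianization) is inherited by groups with isomorphic profinite completions: if $\Gamma_1, \Gamma_2$ are finitely generated residually finite groups with $\hat{\Gamma}_1 \cong \hat{\Gamma}_2$ and every finite-index subgroup of $\Gamma_1$ has finite abelianization, then the same holds for $\Gamma_2$. -/

import Mathlib

/-!
An isomorphism `e` of profinite completions transports finite quotients: for every finite-index
normal `N ≤ Γ₂`, the map `Γ₁ → Γ̂₁ → Γ̂₂ → Γ₂ ⧸ N` is surjective, because `Γ₁` is dense in `Γ̂₁`,
`e` is continuous and `Γ₂ ⧸ N` is discrete. Pulling back the image of `Δ ≤ Γ₂` along these maps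
gives one finite-index `Δ₁ ≤ Γ₁` (it does not depend on `N ≤ Δ`) onto whose finite quotients every
finite quotient of `Δ` lifts. If `Δᵃᵇ` were infinite, it would surject onto `ℤ/m` for every `m`,
and so would the finite group `Δ₁ᵃᵇ`.
-/

/-- The finite-index normal subgroups of `G`. -/
def FinIndexNormal (G : Type*) [Group G] : Type _ :=
  {N : Subgroup G // N.Normal ∧ N.FiniteIndex}

instance {G : Type*} [Group G] (N : FinIndexNormal G) : N.1.Normal := N.2.1
instance {G : Type*} [Group G] (N : FinIndexNormal G) : N.1.FiniteIndex := N.2.2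

/-- Transition map between two finite quotients of `G`. -/
def transMap {G : Type*} [Group G] {N M : FinIndexNormal G} (h : N.1 ≤ M.1) :
    G ⧸ N.1 →* G ⧸ M.1 :=
  QuotientGroup.map N.1 M.1 (MonoidHom.id G) (by simpa using h)

/-- The profinite completion of `G`: the inverse limit of the system of finite
quotients `G ⧸ N` over the finite-index normal subgroups `N` of `G`, realized as
the subgroup of compatible tuples in the product of all the finite quotients. -/
def profiniteCompletion (G : Type*) [Group G] :
    Subgroup (∀ N : FinIndexNormal G, G ⧸ N.1) where
  carrier := {x | ∀ (N M : FinIndexNormal G) (h : N.1 ≤ M.1), transMap h (x N) = x M}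
  one_mem' := by intro N M h; simp
  mul_mem' := by
    intro a b ha hb N M h
    simp only [Pi.mul_apply, map_mul, ha N M h, hb N M h]
  inv_mem' := by
    intro a ha N M h
    simp only [Pi.inv_apply, map_inv, ha N M h]

/-- The canonical map from `G` to its profinite completion. -/
def toProfiniteCompletion (G : Type*) [Group G] : G →* profiniteCompletion G where
  toFun g := ⟨fun N => QuotientGroup.mk g, fun _ _ _ => rfl⟩
  map_one' := rfl
  map_mul' _ _ := rfl

/-- Each finite quotient carries the discrete topology. -/
instance {G : Type*} [Group G] (N : FinIndexNormal G) : TopologicalSpace (G ⧸ N.1) := ⊥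

/-- A group has FAb if every finite-index subgroup has finite abelianization. -/
def FAb (Γ : Type*) [Group Γ] : Prop :=
  ∀ Δ : Subgroup Γ, Δ.FiniteIndex → Finite (Abelianization Δ)

open QuotientGroup

namespace FinIndexNormal

variable {G : Type*} [Group G]

def of (N : Subgroup G) [N.Normal] [N.FiniteIndex] : FinIndexNormal G :=
  ⟨N, inferInstance, inferInstance⟩

end FinIndexNormal

namespace profiniteCompletion

variable {G : Type*} [Group G]

instance (N : FinIndexNormal G) : DiscreteTopology (G ⧸ N.1) := ⟨rfl⟩

def proj (N : FinIndexNormal G) : profiniteCompletion G →* G ⧸ N.1 :=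
  (Pi.evalMonoidHom _ N).comp (profiniteCompletion G).subtype

theorem continuous_proj (N : FinIndexNormal G) : Continuous (proj N) :=
  (continuous_apply N).comp continuous_subtype_val

theorem transMap_comp_proj {N M : FinIndexNormal G} (h : N.1 ≤ M.1) :
    (transMap h).comp (proj N) = proj M :=
  MonoidHom.ext fun x => x.2 N M h

theorem proj_toProfiniteCompletion (N : FinIndexNormal G) (g : G) :
    proj N (toProfiniteCompletion G g) = g :=
  rfl

theorem denseRange_toProfiniteCompletion : DenseRange (toProfiniteCompletion G) := by
  refine dense_iff_inter_open.mpr fun U hU ⟨x, hx⟩ => ?_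
  obtain ⟨V, hV, rfl⟩ := isOpen_induced_iff.mp hU
  obtain ⟨I, u, hu, hIV⟩ := isOpen_pi_iff.mp hV x.1 hx
  -- a single finite quotient that sees all the coordinates in `I`
  let M : Subgroup G := ⨅ N ∈ I, N.1
  have : M.Normal := Subgroup.normal_iInf_normal fun N => Subgroup.normal_iInf_normal fun _ => N.2.1
  have : M.FiniteIndex := Subgroup.finiteIndex_iInf' _ fun N _ => N.2.2
  obtain ⟨g, hg⟩ := mk_surjective (x.1 (.of M))
  refine ⟨_, hIV fun N hN => ?_, g, rfl⟩
  have hMN : M ≤ N.1 := iInf₂_le N hN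
  have hgN : (toProfiniteCompletion G g).1 N = x.1 N := by
    rw [← x.2 (.of M) N hMN, ← hg]
    rfl
  rw [hgN]
  exact (hu N hN).2

theorem surjective_proj_comp_toProfiniteCompletion {H : Type*} [Group H]
    {φ : profiniteCompletion G →* profiniteCompletion H} (hφ : Continuous φ)
    (hφs : Function.Surjective φ) (N : FinIndexNormal H) :
    Function.Surjective ((proj N).comp (φ.comp (toProfiniteCompletion G))) := by
  intro y
  obtain ⟨h, rfl⟩ := mk_surjective y
  obtain ⟨x, hx⟩ := hφs (toProfiniteCompletion H h)
  have hopen : IsOpen ((proj N ∘ φ) ⁻¹' {(h : H ⧸ N.1)}) :=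
    ((continuous_proj N).comp hφ).isOpen_preimage _ (isOpen_discrete _)
  exact denseRange_toProfiniteCompletion.exists_mem_open hopen
    ⟨x, by simp [hx, proj_toProfiniteCompletion]⟩

end profiniteCompletion

theorem AddCommGroup.exists_surjective_zmod_of_infinite (A : Type*) [AddCommGroup A]
    [AddGroup.FG A] [Infinite A] (n : ℕ) : ∃ f : A →+ ZMod n, Function.Surjective f := by
  classical
  obtain ⟨k, ι, _, p, hp, e, ⟨φ⟩⟩ := AddCommGroup.equiv_free_prod_directSum_zmod A
  have : ∀ i, NeZero (p i ^ e i) := fun i => ⟨pow_ne_zero _ (hp i).ne_zero⟩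
  -- the torsion part is finite, so there is a free summand `ℤ` to project onto
  obtain ⟨i⟩ : Nonempty (Fin k) := by
    by_contra hk
    have : IsEmpty (Fin k) := not_nonempty_iff.mp hk
    have : Finite (DirectSum ι fun i => ZMod (p i ^ e i)) :=
      inferInstanceAs (Finite (Π₀ i, ZMod (p i ^ e i)))
    have : Finite A := Finite.of_equiv _ φ.toEquiv.symm
    exact not_finite A
  refine ⟨(Int.castAddHom (ZMod n)).comp ((Finsupp.applyAddHom i).comp
    ((AddMonoidHom.fst _ _).comp φ.toAddMonoidHom)), fun q => ?_⟩
  obtain ⟨z, rfl⟩ := ZMod.intCast_surjective q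
  exact ⟨φ.symm (Finsupp.single i z, 0), by simp⟩

theorem Abelianization.of_surjective (G : Type*) [Group G] :
    Function.Surjective (of : G →* Abelianization G) :=
  QuotientGroup.mk'_surjective _

theorem exists_surjective_zmod_of_infinite_abelianization (G : Type*) [Group G] [Group.FG G]
    [Infinite (Abelianization G)] (n : ℕ) :
    ∃ f : G →* Multiplicative (ZMod n), Function.Surjective f := by
  have : Group.FG (Abelianization G) := Group.fg_of_surjective (Abelianization.of_surjective G)
  obtain ⟨f, hf⟩ :=
    AddCommGroup.exists_surjective_zmod_of_infinite (Additive (Abelianization G)) n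
  exact ⟨(AddMonoidHom.toMultiplicativeRight f).comp Abelianization.of,
    (Multiplicative.ofAdd.surjective.comp hf).comp (Abelianization.of_surjective G)⟩

theorem card_le_card_abelianization {G A : Type*} [Group G] [CommGroup A]
    [Finite (Abelianization G)] {f : G →* A} (hf : Function.Surjective f) :
    Nat.card A ≤ Nat.card (Abelianization G) := by
  have hlift : Function.Surjective (Abelianization.lift f) :=
    .of_comp (g := Abelianization.of) fun a => by simpa using hf a
  exact Nat.card_le_card_of_surjective _ hlift

theorem exists_surjective_comap_map_mk' {G H F : Type*} [Group G] [Group H] [Group F]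
    {M : Subgroup H} [M.Normal] {q : G →* H ⧸ M} (hq : Function.Surjective q)
    {Δ : Subgroup H} {f : Δ →* F} (hf : Function.Surjective f) (hM : M.subgroupOf Δ ≤ f.ker) :
    ∃ f₁ : (Δ.map (mk' M)).comap q →* F, Function.Surjective f₁ := by
  let π := (mk' M).subgroupMap Δ
  have hπ : π.ker ≤ f.ker := fun d hd =>
    hM ((eq_one_iff (d : H)).mp (by exact congrArg Subtype.val hd))
  let ψ := π.liftOfSurjective ((mk' M).subgroupMap_surjective Δ) ⟨f, hπ⟩
  have hψ : Function.Surjective ψ := .of_comp (g := π) fun y => by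
    obtain ⟨d, rfl⟩ := hf y
    exact ⟨d, π.liftOfRightInverse_comp_apply _ _ _ d⟩
  exact ⟨ψ.comp (q.subgroupComap _), hψ.comp (q.subgroupComap_surjective_of_surjective _ hq)⟩

theorem comap_transMap_map_mk' {G : Type*} [Group G] {Δ : Subgroup G} {M N : FinIndexNormal G}
    (hMN : M.1 ≤ N.1) (hN : N.1 ≤ Δ) :
    (Δ.map (mk' N.1)).comap (transMap hMN) = Δ.map (mk' M.1) := by
  apply Subgroup.comap_injective (mk'_surjective M.1)
  rw [Subgroup.comap_comap, show (transMap hMN).comp (mk' M.1) = mk' N.1 from rfl,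
    comap_map_mk', comap_map_mk', sup_eq_right.2 hN, sup_eq_right.2 (hMN.trans hN)]

namespace profiniteCompletion

universe u

variable {G H : Type*} [Group G] [Group H]

theorem comap_proj_comp_map_mk' (Φ : G →* profiniteCompletion H) {Δ : Subgroup H}
    {M N : FinIndexNormal H} (hMN : M.1 ≤ N.1) (hN : N.1 ≤ Δ) :
    (Δ.map (mk' N.1)).comap ((proj N).comp Φ) = (Δ.map (mk' M.1)).comap ((proj M).comp Φ) := by
  rw [← transMap_comp_proj hMN, MonoidHom.comp_assoc, ← Subgroup.comap_comap,
    comap_transMap_map_mk' hMN hN]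

theorem exists_finiteIndex_lift_surjective (Φ : G →* profiniteCompletion H)
    (hΦ : ∀ N, Function.Surjective ((proj N).comp Φ)) (Δ : Subgroup H) [Δ.FiniteIndex] :
    ∃ Δ₁ : Subgroup G, Δ₁.FiniteIndex ∧ ∀ {F : Type u} [Group F] [Finite F] (f : Δ →* F),
      Function.Surjective f → ∃ f₁ : Δ₁ →* F, Function.Surjective f₁ := by
  let N₀ := FinIndexNormal.of Δ.normalCore
  refine ⟨(Δ.map (mk' N₀.1)).comap ((proj N₀).comp Φ), ⟨?_⟩, fun f hf => ?_⟩
  · rw [Subgroup.index_comap_of_surjective _ (hΦ N₀)]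
    exact Subgroup.FiniteIndex.index_ne_zero
  let K := f.ker.map Δ.subtype
  have : K.FiniteIndex := ⟨by
    rw [Subgroup.index_map_subtype]
    exact mul_ne_zero Subgroup.FiniteIndex.index_ne_zero Subgroup.FiniteIndex.index_ne_zero⟩
  -- the pulled-back subgroup is the same at every level below `Δ`; pick one inside `ker f`
  let M := FinIndexNormal.of (Δ.normalCore ⊓ K.normalCore)
  have hMN₀ : M.1 ≤ N₀.1 := inf_le_left
  have hMK : M.1 ≤ K := inf_le_right.trans K.normalCore_le
  rw [comap_proj_comp_map_mk' Φ hMN₀ Δ.normalCore_le]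
  refine exists_surjective_comap_map_mk' (hΦ M) hf fun d hd => ?_
  obtain ⟨d', hd', hdd'⟩ := hMK hd
  rwa [← Subtype.ext hdd']

end profiniteCompletion

theorem fab_profinite_property_general (Γ₁ Γ₂ : Type*) [Group Γ₁] [Group Γ₂]
    (h₂ : Group.FG Γ₂)
    (e : profiniteCompletion Γ₁ ≃* profiniteCompletion Γ₂)
    (he : Continuous e)
    (hfab : FAb Γ₁) : FAb Γ₂ := by
  intro Δ hΔ
  obtain ⟨Δ₁, hΔ₁, hlift⟩ := profiniteCompletion.exists_finiteIndex_lift_surjective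
    (e.toMonoidHom.comp (toProfiniteCompletion Γ₁))
    (profiniteCompletion.surjective_proj_comp_toProfiniteCompletion he e.surjective) Δ
  have := hfab Δ₁ hΔ₁
  by_contra hinf
  rw [not_finite_iff_infinite] at hinf
  obtain ⟨f, hf⟩ := exists_surjective_zmod_of_infinite_abelianization Δ
    (Nat.card (Abelianization Δ₁) + 1)
  obtain ⟨f₁, hf₁⟩ := hlift f hf
  have hcard := card_le_card_abelianization hf₁
  rw [Nat.card_congr Multiplicative.toAdd, Nat.card_zmod] at hcard
  omega

/-- FAb is a profinite property: if two finitely generated residually finite groups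
have isomorphic profinite completions (as topological groups) and the first has FAb,
so does the second. -/
theorem fab_profinite_property (Γ₁ Γ₂ : Type*) [Group Γ₁] [Group Γ₂]
    (h₁ : Group.FG Γ₁) (h₂ : Group.FG Γ₂)
    (hres₁ : Function.Injective (toProfiniteCompletion Γ₁))
    (hres₂ : Function.Injective (toProfiniteCompletion Γ₂))
    (e : profiniteCompletion Γ₁ ≃* profiniteCompletion Γ₂)
    (he : Continuous e) (he' : Continuous e.symm)
    (hfab : FAb Γ₁) : FAb Γ₂ :=
  fab_profinite_property_general Γ₁ Γ₂ h₂ e he hfab
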